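/- A digraph homomorphism ψ : G₁ → G₂ induces a chain map on ∂-invariant paths commuting with the boundary operator (ψ ∘ ∂ = ∂ ∘ ψ on elementary allowed paths), and hence induces homomorphisms ψ* : H_p(G₁) → H_p(G₂) on path homology; this assignment is functorial. -/

import Mathlib

/-- The space of paths on a vertex set `V` with coefficients in `K`: formal
`K`-linear combinations of elementary paths, an elementary `p`-path being encoded
as the list of its `p + 1` vertices. -/
abbrev PathSpace (K : Type*) [Field K] (V : Type*) := (List V) →₀ K

/-- The boundary operator `∂`, with `∂ e_{i₀…i_p} = Σ_q (-1)^q e_{i₀…î_q…i_p}`. -/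
noncomputable def bd (K : Type*) [Field K] (V : Type*) :
    PathSpace K V →ₗ[K] PathSpace K V :=
  Finsupp.lsum K fun l =>
    ∑ i ∈ Finset.range l.length, ((-1 : K) ^ i) • Finsupp.lsingle (l.eraseIdx i)

/-- The submodule `A_p` of allowed `p`-paths of the digraph `(V, E)`: spanned by
the elementary `p`-paths all of whose consecutive vertices are joined by an arc. -/
noncomputable def allowedPaths (K : Type*) [Field K] {V : Type*}
    (E : V → V → Prop) (p : ℕ) : Submodule K (PathSpace K V) :=
  Submodule.span K
    {x | ∃ l : List V, l.Chain' E ∧ l.length = p + 1 ∧ x = Finsupp.single l 1}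

/-- The submodule `Ω_p = {v ∈ A_p : ∂v ∈ A_{p-1}}` of `∂`-invariant paths
(with `Ω₀ = A₀`). -/
noncomputable def omegaPaths (K : Type*) [Field K] {V : Type*}
    (E : V → V → Prop) : ℕ → Submodule K (PathSpace K V)
  | 0 => allowedPaths K E 0
  | (p + 1) => allowedPaths K E (p + 1) ⊓ (allowedPaths K E p).comap (bd K V)

/-- The cycles in degree `p`: `Z_p = Ω_p ∩ ker ∂_p` (with `∂₀ = 0`). -/
noncomputable def cyclePaths (K : Type*) [Field K] {V : Type*}
    (E : V → V → Prop) : ℕ → Submodule K (PathSpace K V)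
  | 0 => omegaPaths K E 0
  | (p + 1) => omegaPaths K E (p + 1) ⊓ LinearMap.ker (bd K V)

/-- The boundaries in degree `p`: `B_p = ∂(Ω_{p+1})`. -/
noncomputable def boundaryPaths (K : Type*) [Field K] {V : Type*}
    (E : V → V → Prop) (p : ℕ) : Submodule K (PathSpace K V) :=
  Submodule.map (bd K V) (omegaPaths K E (p + 1))

/-- The path homology `H_p(G) = ker ∂_p / im ∂_{p+1}` of the digraph `(V, E)`:
the image of the cycles `Z_p` in the quotient of the path space by the
boundaries `B_p` (since `B_p ≤ Z_p`, this is `Z_p / B_p`). -/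
noncomputable def pathHomology (K : Type*) [Field K] {V : Type*}
    (E : V → V → Prop) (p : ℕ) : Type _ :=
  ↥((cyclePaths K E p).map (boundaryPaths K E p).mkQ)

/-- The class in `H_p(G)` of a cycle `z ∈ Z_p`. -/
noncomputable def homologyClass (K : Type*) [Field K] {V : Type*}
    (E : V → V → Prop) (p : ℕ) (z : ↥(cyclePaths K E p)) : pathHomology K E p :=
  ⟨(boundaryPaths K E p).mkQ z.1, Submodule.mem_map_of_mem z.2⟩

noncomputable instance pathHomology.instAddCommGroup (K : Type*) [Field K]
    {V : Type*} (E : V → V → Prop) (p : ℕ) : AddCommGroup (pathHomology K E p) :=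
  inferInstanceAs (AddCommGroup ↥((cyclePaths K E p).map (boundaryPaths K E p).mkQ))

noncomputable instance pathHomology.instModule (K : Type*) [Field K]
    {V : Type*} (E : V → V → Prop) (p : ℕ) : Module K (pathHomology K E p) :=
  inferInstanceAs (Module K ↥((cyclePaths K E p).map (boundaryPaths K E p).mkQ))

/-- A digraph homomorphism maps arcs to arcs. -/
def IsDigraphHom {V₁ V₂ : Type*} (E₁ : V₁ → V₁ → Prop) (E₂ : V₂ → V₂ → Prop)
    (ψ : V₁ → V₂) : Prop :=
  ∀ u v, E₁ u v → E₂ (ψ u) (ψ v)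

/-- The linear map on path spaces induced by a vertex map, sending an elementary
path to its image (with the same sign pattern). -/
noncomputable def mapPath (K : Type*) [Field K] {V₁ V₂ : Type*} (ψ : V₁ → V₂) :
    PathSpace K V₁ →ₗ[K] PathSpace K V₂ :=
  Finsupp.lsum K fun l => Finsupp.lsingle (l.map ψ)

/-- `f` is the map induced on `p`-th path homology by the vertex map `ψ`. -/
def IsInducedHom (K : Type*) [Field K] {V₁ V₂ : Type*} (E₁ : V₁ → V₁ → Prop)
    (E₂ : V₂ → V₂ → Prop) (p : ℕ) (ψ : V₁ → V₂)
    (f : pathHomology K E₁ p →ₗ[K] pathHomology K E₂ p) : Prop :=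
  ∀ (z : ↥(cyclePaths K E₁ p)) (h : mapPath K ψ z.1 ∈ cyclePaths K E₂ p),
    f (homologyClass K E₁ p z) = homologyClass K E₂ p ⟨mapPath K ψ z.1, h⟩

/-! Since `mapPath ψ` commutes with `∂` on all of the path space and maps allowed paths to
allowed paths, it preserves `Ω_•`, cycles and boundaries, so it descends to
`Z_p / B_p`. Every homology class is represented by a cycle, which makes the induced map
unique; uniqueness then gives functoriality, because `mapPath (χ ∘ ψ) = mapPath χ ∘ mapPath ψ`
and `mapPath id = id`. -/

section

variable {K : Type*} [Field K] {V₁ V₂ V₃ : Type*}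

@[simp]
lemma mapPath_single (ψ : V₁ → V₂) (l : List V₁) (a : K) :
    mapPath K ψ (Finsupp.single l a) = Finsupp.single (l.map ψ) a := by
  simp [mapPath]

lemma bd_single (l : List V₁) (a : K) :
    bd K V₁ (Finsupp.single l a) =
      ∑ i ∈ Finset.range l.length, ((-1 : K) ^ i) • Finsupp.single (l.eraseIdx i) a := by
  simp [bd]

lemma mapPath_comp_bd (ψ : V₁ → V₂) :
    mapPath K ψ ∘ₗ bd K V₁ = bd K V₂ ∘ₗ mapPath K ψ := by
  ext l : 2
  simp [bd_single, List.eraseIdx_map]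

lemma mapPath_bd (ψ : V₁ → V₂) (x : PathSpace K V₁) :
    mapPath K ψ (bd K V₁ x) = bd K V₂ (mapPath K ψ x) :=
  LinearMap.congr_fun (mapPath_comp_bd ψ) x

lemma mapPath_comp (χ : V₂ → V₃) (ψ : V₁ → V₂) :
    mapPath K (χ ∘ ψ) = mapPath K χ ∘ₗ mapPath K ψ := by
  ext l : 2
  simp

lemma mapPath_id : mapPath K (id : V₁ → V₁) = LinearMap.id := by
  ext l : 2
  simp

lemma homologyClass_surjective {V : Type*} (E : V → V → Prop) (p : ℕ) :
    Function.Surjective (homologyClass K E p) := by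
  rintro ⟨_, z, hz, rfl⟩
  exact ⟨⟨z, hz⟩, rfl⟩

namespace IsDigraphHom

variable {E₁ : V₁ → V₁ → Prop} {E₂ : V₂ → V₂ → Prop} {E₃ : V₃ → V₃ → Prop}
  {ψ : V₁ → V₂}

lemma comp {χ : V₂ → V₃} (hχ : IsDigraphHom E₂ E₃ χ) (hψ : IsDigraphHom E₁ E₂ ψ) :
    IsDigraphHom E₁ E₃ (χ ∘ ψ) :=
  fun u v huv => hχ _ _ (hψ u v huv)

protected lemma id (E : V₁ → V₁ → Prop) : IsDigraphHom E E id :=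
  fun _ _ h => h

variable (hψ : IsDigraphHom E₁ E₂ ψ)
include hψ

lemma mapPath_mem_allowedPaths {q : ℕ} {x : PathSpace K V₁}
    (hx : x ∈ allowedPaths K E₁ q) : mapPath K ψ x ∈ allowedPaths K E₂ q := by
  suffices (allowedPaths K E₁ q).map (mapPath K ψ) ≤ allowedPaths K E₂ q from
    this (Submodule.mem_map_of_mem hx)
  rw [allowedPaths, Submodule.map_span, Submodule.span_le]
  rintro _ ⟨_, ⟨l, hl, hlen, rfl⟩, rfl⟩
  exact Submodule.subset_span
    ⟨l.map ψ, List.isChain_map_of_isChain ψ hψ hl, by simp [hlen], mapPath_single ψ l 1⟩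

lemma mapPath_mem_omegaPaths {q : ℕ} {x : PathSpace K V₁}
    (hx : x ∈ omegaPaths K E₁ q) : mapPath K ψ x ∈ omegaPaths K E₂ q := by
  cases q with
  | zero => exact hψ.mapPath_mem_allowedPaths hx
  | succ q =>
    obtain ⟨hA, hbdA⟩ := hx
    exact ⟨hψ.mapPath_mem_allowedPaths hA,
      Submodule.mem_comap.2 (mapPath_bd ψ x ▸ hψ.mapPath_mem_allowedPaths hbdA)⟩

lemma mapPath_mem_cyclePaths {q : ℕ} {x : PathSpace K V₁}
    (hx : x ∈ cyclePaths K E₁ q) : mapPath K ψ x ∈ cyclePaths K E₂ q := by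
  cases q with
  | zero => exact hψ.mapPath_mem_omegaPaths hx
  | succ q =>
    obtain ⟨hΩ, hker⟩ := hx
    refine ⟨hψ.mapPath_mem_omegaPaths hΩ, LinearMap.mem_ker.2 ?_⟩
    rw [← mapPath_bd, LinearMap.mem_ker.1 hker, map_zero]

lemma mapPath_mem_boundaryPaths {q : ℕ} {x : PathSpace K V₁}
    (hx : x ∈ boundaryPaths K E₁ q) : mapPath K ψ x ∈ boundaryPaths K E₂ q := by
  obtain ⟨y, hy, rfl⟩ := hx
  exact ⟨mapPath K ψ y, hψ.mapPath_mem_omegaPaths hy, (mapPath_bd ψ y).symm⟩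

noncomputable def inducedHom (p : ℕ) : pathHomology K E₁ p →ₗ[K] pathHomology K E₂ p :=
  ((boundaryPaths K E₁ p).mapQ (boundaryPaths K E₂ p) (mapPath K ψ)
      fun _ => hψ.mapPath_mem_boundaryPaths).restrict <| by
    rintro _ ⟨z, hz, rfl⟩
    exact ⟨mapPath K ψ z, hψ.mapPath_mem_cyclePaths hz, rfl⟩

lemma isInducedHom_inducedHom (p : ℕ) : IsInducedHom K E₁ E₂ p ψ (hψ.inducedHom p) :=
  fun _ _ => rfl

lemma isInducedHom_unique {p : ℕ} {f g : pathHomology K E₁ p →ₗ[K] pathHomology K E₂ p}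
    (hf : IsInducedHom K E₁ E₂ p ψ f) (hg : IsInducedHom K E₁ E₂ p ψ g) : f = g := by
  ext x
  obtain ⟨z, rfl⟩ := homologyClass_surjective E₁ p x
  rw [hf z (hψ.mapPath_mem_cyclePaths z.2), hg z (hψ.mapPath_mem_cyclePaths z.2)]

end IsDigraphHom

namespace IsInducedHom

variable {E₁ : V₁ → V₁ → Prop} {E₂ : V₂ → V₂ → Prop} {E₃ : V₃ → V₃ → Prop} {p : ℕ}

lemma comp {ψ : V₁ → V₂} {χ : V₂ → V₃} {f : pathHomology K E₁ p →ₗ[K] pathHomology K E₂ p}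
    {g : pathHomology K E₂ p →ₗ[K] pathHomology K E₃ p} (hψ : IsDigraphHom E₁ E₂ ψ)
    (hχ : IsDigraphHom E₂ E₃ χ) (hf : IsInducedHom K E₁ E₂ p ψ f)
    (hg : IsInducedHom K E₂ E₃ p χ g) : IsInducedHom K E₁ E₃ p (χ ∘ ψ) (g ∘ₗ f) := by
  intro z _
  have hz₂ := hψ.mapPath_mem_cyclePaths z.2
  rw [LinearMap.comp_apply, hf z hz₂, hg _ (hχ.mapPath_mem_cyclePaths hz₂)]
  simp only [mapPath_comp, LinearMap.comp_apply]

protected lemma id (E : V₁ → V₁ → Prop) : IsInducedHom K E E p id LinearMap.id := by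
  intro z _
  simp only [mapPath_id, LinearMap.id_apply]

end IsInducedHom

end

/-- a digraph homomorphism `ψ : G₁ → G₂` commutes with the boundary
operator on elementary allowed paths, maps cycles to cycles and boundaries to
boundaries, hence induces a (unique) homomorphism `ψ* : H_p(G₁) → H_p(G₂)` on path
homology; moreover this assignment is functorial: it respects composition and
sends identities to identities. -/
theorem pathHomology_functorial (K : Type*) [Field K] {V₁ V₂ V₃ : Type*}
    (E₁ : V₁ → V₁ → Prop) (E₂ : V₂ → V₂ → Prop) (E₃ : V₃ → V₃ → Prop)
    (p : ℕ) (ψ : V₁ → V₂) (hψ : IsDigraphHom E₁ E₂ ψ) :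
    (∀ l : List V₁, l.Chain' E₁ →
      mapPath K ψ (bd K V₁ (Finsupp.single l 1)) =
        bd K V₂ (mapPath K ψ (Finsupp.single l 1))) ∧
    (∀ x ∈ cyclePaths K E₁ p, mapPath K ψ x ∈ cyclePaths K E₂ p) ∧
    (∀ x ∈ boundaryPaths K E₁ p, mapPath K ψ x ∈ boundaryPaths K E₂ p) ∧
    (∃! f : pathHomology K E₁ p →ₗ[K] pathHomology K E₂ p,
      IsInducedHom K E₁ E₂ p ψ f) ∧
    (∀ (χ : V₂ → V₃), IsDigraphHom E₂ E₃ χ →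
      ∀ (f : pathHomology K E₁ p →ₗ[K] pathHomology K E₂ p)
        (g : pathHomology K E₂ p →ₗ[K] pathHomology K E₃ p)
        (h : pathHomology K E₁ p →ₗ[K] pathHomology K E₃ p),
        IsInducedHom K E₁ E₂ p ψ f → IsInducedHom K E₂ E₃ p χ g →
        IsInducedHom K E₁ E₃ p (χ ∘ ψ) h → h = g.comp f) ∧
    (∀ f : pathHomology K E₁ p →ₗ[K] pathHomology K E₁ p,
      IsInducedHom K E₁ E₁ p id f → f = LinearMap.id) := by
  refine ⟨fun l _ => mapPath_bd ψ _, fun _ => hψ.mapPath_mem_cyclePaths,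
    fun _ => hψ.mapPath_mem_boundaryPaths,
    ⟨hψ.inducedHom p, hψ.isInducedHom_inducedHom p,
      fun _ hf => hψ.isInducedHom_unique hf (hψ.isInducedHom_inducedHom p)⟩,
    fun χ hχ _ _ _ hf hg hh => (hχ.comp hψ).isInducedHom_unique hh (hf.comp hψ hχ hg),
    fun _ hf => (IsDigraphHom.id E₁).isInducedHom_unique hf (IsInducedHom.id E₁)⟩
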